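/- Let N > 2 be an integer. (a) If 1 < p < N, there exists k₃ < (N-p)/(1-p) such that for every k ≤ k₃ there is no differentiable function H : [0, π/2] → ℝ with H(0) = 0 satisfying the H-equation on (0, π/2); that is, every solution starting from H(0) = 0 blows up to -∞ at some point x_k ≤ π/2. (b) If p ≥ N, there exists k₄ < 0 with the same conclusion for every k ≤ k₄. -/

import Mathlib

/-!
For `k → -∞` the `cot` term and the `k (p - N)` term of the H-equation are dominated, via AM–GM,
by the negative quartic term `(1 - p)(H² + k²)²`. On `(π/4, π/2)`, where `0 ≤ cot ≤ 1`, this forces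
`arctan (H / k)` to increase with slope at least `(p - 1)(-k) / (2 max (p - 1) 1)`, hence by more
than `π` across an interval of length `π/4` once `-k` is large: impossible for an arctangent.
-/

noncomputable section
open Real Set Filter Topology

/-- `H` satisfies the first-order H-equation (for parameters `p`, `N`, `k`) on the set `I`:
`((p-1)H² + k²)H' = (1-p)(H² + k²)² + (H² + k²)(k(p-N) + (2-N)·H·cot x)`. -/
def HEqOn (p : ℝ) (N : ℕ) (k : ℝ) (H : ℝ → ℝ) (I : Set ℝ) : Prop :=
  ∀ x ∈ I,
    ((p - 1) * (H x) ^ 2 + k ^ 2) * deriv H x =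
      (1 - p) * ((H x) ^ 2 + k ^ 2) ^ 2
        + ((H x) ^ 2 + k ^ 2) * (k * (p - (N : ℝ)) + (2 - (N : ℝ)) * H x * Real.cot x)

lemma cot_mem_Icc_zero_one {x : ℝ} (hx : x ∈ Icc (π / 4) (π / 2)) : cot x ∈ Icc 0 1 := by
  have hsin : 0 < sin x :=
    sin_pos_of_pos_of_lt_pi (by linarith [hx.1, pi_pos]) (by linarith [hx.2, pi_pos])
  have hcos : 0 ≤ cos x := cos_nonneg_of_mem_Icc ⟨by linarith [hx.1, pi_pos], hx.2⟩
  have hcos_le_sin : cos x ≤ sin x :=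
    calc cos x ≤ cos (π / 4) :=
          cos_le_cos_of_nonneg_of_le_pi (by positivity) (by linarith [hx.2, pi_pos]) hx.1
      _ = sin (π / 4) := by rw [cos_pi_div_four, sin_pi_div_four]
      _ ≤ sin x := sin_le_sin_of_le_of_le_pi_div_two (by linarith [pi_pos]) hx.2 hx.1
  rw [cot_eq_cos_div_sin]
  exact ⟨div_nonneg hcos hsin.le, (div_le_one hsin).2 hcos_le_sin⟩

lemma mul_sub_lt_pi_of_le_deriv_arctan {f f' : ℝ → ℝ} {a b L : ℝ} (hab : a < b)
    (hf : ContinuousOn f (Icc a b)) (hf' : ∀ x ∈ Ioo a b, HasDerivAt f (f' x) x)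
    (hL : ∀ x ∈ Ioo a b, L ≤ f' x / (1 + f x ^ 2)) : L * (b - a) < π := by
  obtain ⟨c, hc, hslope⟩ := exists_hasDerivAt_eq_slope (fun x => arctan (f x))
    (fun x => f' x / (1 + f x ^ 2)) hab (continuous_arctan.comp_continuousOn hf)
    fun x hx => by simpa only [one_div_mul_eq_div] using (hf' x hx).arctan
  have hgain : L * (b - a) ≤ arctan (f b) - arctan (f a) := by
    rw [← le_div_iff₀ (sub_pos.2 hab), ← hslope]
    exact hL c hc
  linarith [neg_pi_div_two_lt_arctan (f a), arctan_lt_pi_div_two (f b)]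

section HEquation

variable {p N k h h' c : ℝ}

lemma heq_bracket_le (hp : 1 < p) (hc : c ^ 2 ≤ 1)
    (hk : k * (p - N) + (N - 2) ^ 2 / (2 * (p - 1)) ≤ (p - 1) * k ^ 2 / 2) :
    (1 - p) * (h ^ 2 + k ^ 2) + (k * (p - N) + (2 - N) * h * c) ≤
      -((p - 1) * (h ^ 2 + k ^ 2) / 2) := by
  have amgm : (2 - N) * h * c - (p - 1) * h ^ 2 / 2 ≤ (N - 2) ^ 2 / (2 * (p - 1)) := by
    rw [le_div_iff₀ (by linarith)]
    nlinarith [sq_nonneg ((p - 1) * h + (N - 2) * c),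
      mul_le_mul_of_nonneg_left hc (sq_nonneg (N - 2))]
  linarith

lemma mul_deriv_le_of_heq (hp : 1 < p) (hk0 : k ≠ 0) (hc : c ^ 2 ≤ 1)
    (hk : k * (p - N) + (N - 2) ^ 2 / (2 * (p - 1)) ≤ (p - 1) * k ^ 2 / 2)
    (heq : ((p - 1) * h ^ 2 + k ^ 2) * h' =
      (1 - p) * (h ^ 2 + k ^ 2) ^ 2 + (h ^ 2 + k ^ 2) * (k * (p - N) + (2 - N) * h * c)) :
    2 * max (p - 1) 1 * h' ≤ -((p - 1) * (h ^ 2 + k ^ 2)) := by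
  set w := h ^ 2 + k ^ 2
  have hw : 0 < w := by positivity
  have hD : 0 < (p - 1) * h ^ 2 + k ^ 2 :=
    add_pos_of_nonneg_of_pos (by nlinarith [sq_nonneg h]) (by positivity)
  have hDw : (p - 1) * h ^ 2 + k ^ 2 ≤ max (p - 1) 1 * w := by
    nlinarith [le_max_left (p - 1) 1, le_max_right (p - 1) 1, sq_nonneg h, sq_nonneg k]
  have hDh' : ((p - 1) * h ^ 2 + k ^ 2) * h' ≤ -((p - 1) * w / 2) * w := by
    have := mul_le_mul_of_nonneg_right (heq_bracket_le (h := h) hp hc hk) hw.le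
    rw [heq]; nlinarith
  have hh' : h' < 0 := by
    by_contra! hh'
    nlinarith [mul_nonneg hD.le hh', mul_pos (by linarith : (0 : ℝ) < p - 1) (mul_pos hw hw)]
  have : max (p - 1) 1 * w * h' ≤ -((p - 1) * w / 2) * w := by
    nlinarith [mul_le_mul_of_nonpos_right hDw hh'.le]
  nlinarith

end HEquation

lemma not_heqOn_Ioo_pi_div_four_pi_div_two {p k : ℝ} (N : ℕ) (hp : 1 < p) (hk0 : k < 0)
    (hk : k * (p - N) + (N - 2) ^ 2 / (2 * (p - 1)) ≤ (p - 1) * k ^ 2 / 2)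
    (hk8 : 8 * max (p - 1) 1 ≤ (p - 1) * (-k)) {H : ℝ → ℝ}
    (hH : DifferentiableOn ℝ H (Icc (π / 4) (π / 2))) :
    ¬ HEqOn p N k H (Ioo (π / 4) (π / 2)) := by
  intro heq
  have hk0' : k ≠ 0 := hk0.ne
  have hderiv : ∀ x ∈ Ioo (π / 4) (π / 2), HasDerivAt (fun y => H y / k) (deriv H x / k) x :=
    fun x hx => ((hH.differentiableAt (Icc_mem_nhds hx.1 hx.2)).hasDerivAt).div_const k
  have hslope : ∀ x ∈ Ioo (π / 4) (π / 2), 4 ≤ deriv H x / k / (1 + (H x / k) ^ 2) := by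
    intro x hx
    have hcot := cot_mem_Icc_zero_one (Ioo_subset_Icc_self hx)
    have hbound := mul_deriv_le_of_heq hp hk0' (pow_le_one₀ hcot.1 hcot.2) hk (heq x hx)
    rw [show deriv H x / k / (1 + (H x / k) ^ 2) = k * deriv H x / (H x ^ 2 + k ^ 2) by
      field_simp; ring, le_div_iff₀ (by positivity)]
    nlinarith [le_max_right (p - 1) 1, sq_nonneg (H x)]
  have := mul_sub_lt_pi_of_le_deriv_arctan (by linarith [pi_pos]) (hH.continuousOn.div_const k)
    hderiv hslope
  linarith

lemma eventually_not_exists_heqOn {p : ℝ} (hp : 1 < p) (N : ℕ) :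
    ∀ᶠ k in atBot, ¬ ∃ H : ℝ → ℝ, DifferentiableOn ℝ H (Icc 0 (π / 2)) ∧ H 0 = 0 ∧
      HEqOn p N k H (Ioo 0 (π / 2)) := by
  have hp1 : 0 < p - 1 := by linarith
  set E := ((N : ℝ) - 2) ^ 2 / (2 * (p - 1))
  filter_upwards [eventually_le_atBot (-1),
    eventually_le_atBot (-(2 * (|(N : ℝ) - p| + E) / (p - 1))),
    eventually_le_atBot (-(8 * max (p - 1) 1 / (p - 1)))] with k hk1 hkq hk8
  rintro ⟨H, hH, -, heq⟩
  have hkq' : 2 * (|(N : ℝ) - p| + E) ≤ -k * (p - 1) :=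
    (div_le_iff₀ hp1).1 (by linarith)
  refine not_heqOn_Ioo_pi_div_four_pi_div_two N hp (by linarith) ?_ ?_
    (hH.mono (Icc_subset_Icc (by positivity) le_rfl))
    fun x hx => heq x ⟨by linarith [hx.1, pi_pos], hx.2⟩
  · change k * (p - N) + E ≤ _
    have hE : 0 ≤ E := by positivity
    nlinarith [mul_nonneg (by linarith : 0 ≤ -k) (sub_nonneg.2 (le_abs_self ((N : ℝ) - p))),
      mul_nonneg hE (by linarith : 0 ≤ -k - 1),
      mul_le_mul_of_nonneg_left hkq' (by linarith : 0 ≤ -k)]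
  · linarith [(div_le_iff₀ hp1).1 (show 8 * max (p - 1) 1 / (p - 1) ≤ -k by linarith)]

lemma exists_lt_forall_le_of_eventually_atBot {P : ℝ → Prop} (hP : ∀ᶠ k in atBot, P k)
    (c : ℝ) : ∃ k₀ < c, ∀ k ≤ k₀, P k := by
  obtain ⟨k₀, hk₀⟩ := (hP.and (eventually_lt_atBot c)).exists_forall_of_atBot
  exact ⟨k₀, (hk₀ k₀ le_rfl).2, fun k hk => (hk₀ k hk).1⟩

theorem shooting_set_bounded_below_general (N : ℕ) (p : ℝ) (hp : 1 < p) :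
    (p < (N : ℝ) → ∃ k₃ < ((N : ℝ) - p) / (1 - p),
      ∀ k ≤ k₃,
        ¬ ∃ H : ℝ → ℝ,
            DifferentiableOn ℝ H (Icc 0 (π / 2)) ∧
            H 0 = 0 ∧
            HEqOn p N k H (Ioo 0 (π / 2))) ∧
    ((N : ℝ) ≤ p → ∃ k₄ < (0 : ℝ),
      ∀ k ≤ k₄,
        ¬ ∃ H : ℝ → ℝ,
            DifferentiableOn ℝ H (Icc 0 (π / 2)) ∧
            H 0 = 0 ∧
            HEqOn p N k H (Ioo 0 (π / 2))) :=
  ⟨fun _ => exists_lt_forall_le_of_eventually_atBot (eventually_not_exists_heqOn hp N) _,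
    fun _ => exists_lt_forall_le_of_eventually_atBot (eventually_not_exists_heqOn hp N) _⟩

/-- The shooting sets are bounded below: for `k` sufficiently negative, no solution of the
H-equation with `H(0) = 0` can exist (as a differentiable function) on all of `[0, π/2]`. -/
theorem shooting_set_bounded_below (N : ℕ) (hN : 2 < N) (p : ℝ) (hp : 1 < p) :
    (p < (N : ℝ) → ∃ k₃ < ((N : ℝ) - p) / (1 - p),
      ∀ k ≤ k₃,
        ¬ ∃ H : ℝ → ℝ,
            DifferentiableOn ℝ H (Icc 0 (π / 2)) ∧
            H 0 = 0 ∧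
            HEqOn p N k H (Ioo 0 (π / 2))) ∧
    ((N : ℝ) ≤ p → ∃ k₄ < (0 : ℝ),
      ∀ k ≤ k₄,
        ¬ ∃ H : ℝ → ℝ,
            DifferentiableOn ℝ H (Icc 0 (π / 2)) ∧
            H 0 = 0 ∧
            HEqOn p N k H (Ioo 0 (π / 2))) :=
  shooting_set_bounded_below_general N p hp
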